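/- Let λ be an orthogonal partition of 2n. Then λ_{2j−1} ≡ λ_{2j} (mod 2) for every j ≥ 1 (i.e. λ is special) if and only if the transpose ^tλ is a symplectic partition of 2n. -/

import Mathlib

/-!
The Galois connection `j ≤ λ_i ↔ i ≤ (ᵗλ)_j` shows that `ᵗλ` has exactly `λ_i - λ_{i+1}` parts
equal to `i`. So the odd part `2k+1` of `ᵗλ` has even multiplicity iff
`λ_{2k+1} ≡ λ_{2k+2} (mod 2)`, and these are precisely the congruences defining speciality.
-/

open Classical

namespace Wald

/-- `S f k = λ_1 + … + λ_k` (partitions are indexed from 1; index 0 is unused). -/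
def S (f : ℕ → ℕ) (k : ℕ) : ℕ := ∑ j ∈ Finset.Icc 1 k, f j

/-- `f` represents a partition of `N`: nonincreasing on indices `≥ 1`,
finitely many nonzero terms, with total sum `N`. -/
structure IsPartition (f : ℕ → ℕ) (N : ℕ) : Prop where
  mono : ∀ ⦃j k : ℕ⦄, 1 ≤ j → j ≤ k → f k ≤ f j
  fin : ∃ m, ∀ j, m < j → f j = 0
  total : ∀ m, (∀ j, m < j → f j = 0) → S f m = N

/-- multiplicity of `i` as a term of the partition -/
noncomputable def mult (f : ℕ → ℕ) (i : ℕ) : ℕ := Set.ncard {j : ℕ | 1 ≤ j ∧ f j = i}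

/-- dominance order: `Dom f g ↔ f ≤ g` -/
def Dom (f g : ℕ → ℕ) : Prop := ∀ k, S f k ≤ S g k

/-- transposed partition: `(transpose f) j = #{i ≥ 1 : f i ≥ j}` for `j ≥ 1` -/
noncomputable def transpose (f : ℕ → ℕ) : ℕ → ℕ :=
  fun j => Set.ncard {i : ℕ | 1 ≤ i ∧ 1 ≤ j ∧ j ≤ f i}

/-- union of two partitions (all terms listed together in nonincreasing order);
it is characterized by `transpose (unionP f g) = transpose f + transpose g`. -/
noncomputable def unionP (f g : ℕ → ℕ) : ℕ → ℕ :=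
  transpose (fun j => transpose f j + transpose g j)

/-- the partition `(1)` -/
def one1 : ℕ → ℕ := fun j => if j = 1 then 1 else 0

/-- symplectic partition: every odd `i ≥ 1` has even multiplicity -/
def Symp (f : ℕ → ℕ) : Prop := ∀ i, Odd i → Even (mult f i)

/-- orthogonal partition: every even `i ≥ 2` has even multiplicity -/
def Orth (f : ℕ → ℕ) : Prop := ∀ i, Even i → 1 ≤ i → Even (mult f i)

/-- `λ_{2j-1} ≡ λ_{2j} (mod 2)` for all `j ≥ 1` (speciality for symplectic
partitions of `2n` and orthogonal partitions of `2n`). -/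
def SpecialPairs (f : ℕ → ℕ) : Prop := ∀ j, 1 ≤ j → f (2*j - 1) % 2 = f (2*j) % 2

/-- speciality for orthogonal partitions of `2n+1`: `λ_1` odd and
`λ_{2j} ≡ λ_{2j+1} (mod 2)` for all `j ≥ 1`. -/
def SpecialOrthOdd (f : ℕ → ℕ) : Prop :=
  Odd (f 1) ∧ ∀ j, 1 ≤ j → f (2*j) % 2 = f (2*j + 1) % 2

/-- `Jord_bp` for symplectic partitions: even `i ≥ 2` with positive multiplicity -/
def JordbpS (f : ℕ → ℕ) : Set ℕ := {i | Even i ∧ 2 ≤ i ∧ 1 ≤ mult f i}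

/-- `Jord_bp` for orthogonal partitions: odd `i ≥ 1` with positive multiplicity -/
def JordbpO (f : ℕ → ℕ) : Set ℕ := {i | Odd i ∧ 1 ≤ mult f i}

/-- the set `{i_1 > … > i_m}` of terms with odd multiplicity -/
def OddSet (f : ℕ → ℕ) : Set ℕ := {i | Odd (mult f i)}

/-- for special symplectic partitions: `{i_1 > … > i_{m'}}`, with `0` added if `m` is odd -/
def Dsymp (f : ℕ → ℕ) : Set ℕ :=
  {i | Odd (mult f i) ∨ (i = 0 ∧ Odd (OddSet f).ncard)}

/-- `a = i_{2h-1}` and `b = i_{2h}` for some `h`: consecutive elements of `Dsymp f`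
with an even number of elements of `Dsymp f` above `a`. -/
def PairedS (f : ℕ → ℕ) (a b : ℕ) : Prop :=
  b < a ∧ a ∈ Dsymp f ∧ b ∈ Dsymp f ∧ Even ((Dsymp f ∩ Set.Ioi a).ncard) ∧
    Dsymp f ∩ Set.Ioo b a = ∅

/-- intervals of a special symplectic partition of `2n` -/
def IsIntervalS (f : ℕ → ℕ) (Δ : Set ℕ) : Prop :=
  (∃ a b, PairedS f a b ∧ Δ = {i | (i = 0 ∨ 1 ≤ mult f i) ∧ b ≤ i ∧ i ≤ a}) ∨
  (∃ i, Even i ∧ (i = 0 ∨ (2 ≤ i ∧ 1 ≤ mult f i)) ∧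
    (¬ ∃ a b, PairedS f a b ∧ b ≤ i ∧ i ≤ a) ∧ Δ = {i})

/-- `a = i_{2h-1}` and `b = i_{2h}` for some `h` (orthogonal partitions of `2n`) -/
def PairedOE (f : ℕ → ℕ) (a b : ℕ) : Prop :=
  b < a ∧ a ∈ OddSet f ∧ b ∈ OddSet f ∧ Even ((OddSet f ∩ Set.Ioi a).ncard) ∧
    OddSet f ∩ Set.Ioo b a = ∅

/-- intervals of a special orthogonal partition of `2n` -/
def IsIntervalOE (f : ℕ → ℕ) (Δ : Set ℕ) : Prop :=
  (∃ a b, PairedOE f a b ∧ Δ = {i | 1 ≤ mult f i ∧ b ≤ i ∧ i ≤ a}) ∨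
  (∃ i, Odd i ∧ 1 ≤ mult f i ∧ (¬ ∃ a b, PairedOE f a b ∧ b ≤ i ∧ i ≤ a) ∧ Δ = {i})

/-- `a = i_{2h}` and `b = i_{2h+1}` for some `h ≥ 1` (orthogonal partitions of `2n+1`) -/
def PairedOO (f : ℕ → ℕ) (a b : ℕ) : Prop :=
  b < a ∧ a ∈ OddSet f ∧ b ∈ OddSet f ∧ Odd ((OddSet f ∩ Set.Ioi a).ncard) ∧
    OddSet f ∩ Set.Ioo b a = ∅

/-- intervals of a special orthogonal partition of `2n+1` (convention `i_0 = ∞`) -/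
def IsIntervalOO (f : ℕ → ℕ) (Δ : Set ℕ) : Prop :=
  (∃ b, b ∈ OddSet f ∧ OddSet f ∩ Set.Ioi b = ∅ ∧ Δ = {i | 1 ≤ mult f i ∧ b ≤ i}) ∨
  (∃ a b, PairedOO f a b ∧ Δ = {i | 1 ≤ mult f i ∧ b ≤ i ∧ i ≤ a}) ∨
  (∃ i, Odd i ∧ 1 ≤ mult f i ∧
    (¬ ((∃ b, b ∈ OddSet f ∧ OddSet f ∩ Set.Ioi b = ∅ ∧ b ≤ i) ∨
        (∃ a b, PairedOO f a b ∧ b ≤ i ∧ i ≤ a))) ∧ Δ = {i})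

/-- `J(Δ) = {j ≥ 1 : λ_j ∈ Δ}` -/
def Jset (f : ℕ → ℕ) (Δ : Set ℕ) : Set ℕ := {j | 1 ≤ j ∧ f j ∈ Δ}

/-- `ζ(λ)` for a special symplectic partition (`j_max(Δ_min) = ∞`, so the smallest
interval contributes no `-1`: its `J`-set has no greatest element). -/
noncomputable def zetaS (f : ℕ → ℕ) : ℕ → ℤ := fun j =>
  if ∃ Δ, IsIntervalS f Δ ∧ IsLeast (Jset f Δ) j then 1
  else if ∃ Δ, IsIntervalS f Δ ∧ IsGreatest (Jset f Δ) j then -1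
  else 0

/-- `ζ(λ)` for a special orthogonal partition of `2n` -/
noncomputable def zetaOE (f : ℕ → ℕ) : ℕ → ℤ := fun j =>
  if ∃ Δ, IsIntervalOE f Δ ∧ IsLeast (Jset f Δ) j then 1
  else if ∃ Δ, IsIntervalOE f Δ ∧ IsGreatest (Jset f Δ) j then -1
  else 0

/-- `J^+` for `λ1` special symplectic and `λ2` special orthogonal (of `2n2`) -/
def JplusSet (f1 f2 : ℕ → ℕ) : Set ℕ :=
  {j | 1 ≤ j ∧ Even (f1 j) ∧ Odd (f2 j) ∧
    ((∃ Δ, IsIntervalS f1 Δ ∧ IsLeast (Jset f1 Δ) j) ∨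
     (∃ Δ, IsIntervalOE f2 Δ ∧ IsLeast (Jset f2 Δ) j))}

/-- `J^-` -/
def JminusSet (f1 f2 : ℕ → ℕ) : Set ℕ :=
  {j | 1 ≤ j ∧ Even (f1 j) ∧ Odd (f2 j) ∧
    ((∃ Δ, IsIntervalS f1 Δ ∧ IsGreatest (Jset f1 Δ) j) ∨
     (∃ Δ, IsIntervalOE f2 Δ ∧ IsGreatest (Jset f2 Δ) j))}

/-- the sequence `ξ` -/
noncomputable def xi (f1 f2 : ℕ → ℕ) : ℕ → ℤ := fun j =>
  if j ∈ JplusSet f1 f2 then 1 else if j ∈ JminusSet f1 f2 then -1 else 0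

/-- partial sums of an integer-valued sequence indexed from 1 -/
def Sz (f : ℕ → ℤ) (k : ℕ) : ℤ := ∑ j ∈ Finset.Icc 1 k, f j

/-- `g` is the greatest orthogonal partition of `N` which is dominated by the
sequence `t` (used to define the Spaltenstein-type duality `d`). -/
def IsDualOf (g : ℕ → ℕ) (N : ℕ) (t : ℕ → ℕ) : Prop :=
  (IsPartition g N ∧ Orth g ∧ Dom g t) ∧
  ∀ ν, IsPartition ν N → Orth ν → Dom ν t → Dom ν g

/-- `g = d(f)` for `f` a symplectic partition of `2m`: the greatest orthogonal
partition of `2m+1` dominated by `^t(f ∪ (1))`. -/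
def IsSympDual (g : ℕ → ℕ) (m : ℕ) (f : ℕ → ℕ) : Prop :=
  IsDualOf g (2*m+1) (transpose (unionP f one1))

/-- `g = d(f)` for `f` an orthogonal partition of `2m`: the greatest orthogonal
partition of `2m` dominated by `^tf`. -/
def IsOrthDual (g : ℕ → ℕ) (m : ℕ) (f : ℕ → ℕ) : Prop :=
  IsDualOf g (2*m) (transpose f)

section Transpose

variable {f : ℕ → ℕ} {m : ℕ}

lemma transpose_eq_card_filter (hm : ∀ j, m < j → f j = 0) {j : ℕ} (hj : 1 ≤ j) :
    transpose f j = ((Finset.Icc 1 m).filter (fun i => j ≤ f i)).card := by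
  rw [transpose, ← Set.ncard_coe_finset]
  congr 1
  ext i
  simp only [Finset.coe_filter, Finset.mem_Icc, Set.mem_ofPred_eq]
  constructor
  · rintro ⟨hi, -, hji⟩
    refine ⟨⟨hi, ?_⟩, hji⟩
    by_contra! hmi
    have := hm i hmi
    omega
  · rintro ⟨⟨hi, -⟩, hji⟩
    exact ⟨hi, hj, hji⟩

lemma le_apply_iff_le_transpose (hmono : ∀ ⦃j k : ℕ⦄, 1 ≤ j → j ≤ k → f k ≤ f j)
    (hm : ∀ j, m < j → f j = 0) {i j : ℕ} (hi : 1 ≤ i) (hj : 1 ≤ j) :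
    j ≤ f i ↔ i ≤ transpose f j := by
  rw [transpose_eq_card_filter hm hj]
  constructor
  · intro hji
    have him : i ≤ m := by
      by_contra! hmi
      have := hm i hmi
      omega
    have hsub : Finset.Icc 1 i ⊆ (Finset.Icc 1 m).filter (fun k => j ≤ f k) := by
      intro k hk
      simp only [Finset.mem_Icc, Finset.mem_filter] at hk ⊢
      exact ⟨⟨hk.1, hk.2.trans him⟩, hji.trans (hmono hk.1 hk.2)⟩
    simpa using Finset.card_le_card hsub
  · intro hit
    by_contra! hfij
    have hsub : (Finset.Icc 1 m).filter (fun k => j ≤ f k) ⊆ Finset.Ico 1 i := by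
      intro k hk
      simp only [Finset.mem_Icc, Finset.mem_filter, Finset.mem_Ico] at hk ⊢
      refine ⟨hk.1.1, ?_⟩
      by_contra! hik
      have := hmono hi hik
      omega
    have := Finset.card_le_card hsub
    simp only [Nat.card_Ico] at this
    omega

lemma mult_transpose (hmono : ∀ ⦃j k : ℕ⦄, 1 ≤ j → j ≤ k → f k ≤ f j)
    (hm : ∀ j, m < j → f j = 0) {i : ℕ} (hi : 1 ≤ i) :
    mult (transpose f) i = f i - f (i + 1) := by
  have hgc := fun {i j : ℕ} => le_apply_iff_le_transpose (i := i) (j := j) hmono hm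
  have hset : {j : ℕ | 1 ≤ j ∧ transpose f j = i} = ↑(Finset.Ioc (f (i + 1)) (f i)) := by
    ext j
    simp only [Set.mem_ofPred_eq, Finset.coe_Ioc, Set.mem_Ioc]
    constructor
    · rintro ⟨hj, hji⟩
      have hle := (hgc hi hj).2 hji.ge
      have hlt := mt (hgc (Nat.le_add_left 1 i) hj).1 (by omega)
      exact ⟨by omega, hle⟩
    · rintro ⟨hlt, hle⟩
      have hj : 1 ≤ j := by omega
      have hge := (hgc hi hj).1 hle
      have hlt' := mt (hgc (Nat.le_add_left 1 i) hj).2 (by omega)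
      exact ⟨hj, by omega⟩
  rw [mult, hset, Set.ncard_coe_finset, Nat.card_Ioc]

lemma S_transpose (hmono : ∀ ⦃j k : ℕ⦄, 1 ≤ j → j ≤ k → f k ≤ f j)
    (hm : ∀ j, m < j → f j = 0) {M : ℕ} (hM : f 1 ≤ M) :
    S (transpose f) M = S f m := by
  have hcol : ∀ i ∈ Finset.Icc 1 m,
      ((Finset.Icc 1 M).filter (fun j => j ≤ f i)).card = f i := by
    intro i hi
    have hfi : f i ≤ M := (hmono le_rfl (Finset.mem_Icc.mp hi).1).trans hM
    rw [show (Finset.Icc 1 M).filter (fun j => j ≤ f i) = Finset.Icc 1 (f i) by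
      ext j; simp only [Finset.mem_Icc, Finset.mem_filter]; omega, Nat.card_Icc]
    omega
  calc S (transpose f) M
      = ∑ j ∈ Finset.Icc 1 M, ∑ i ∈ Finset.Icc 1 m, if j ≤ f i then 1 else 0 := by
        refine Finset.sum_congr rfl fun j hj => ?_
        rw [transpose_eq_card_filter hm (Finset.mem_Icc.mp hj).1, Finset.card_filter]
    _ = ∑ i ∈ Finset.Icc 1 m, ∑ j ∈ Finset.Icc 1 M, if j ≤ f i then 1 else 0 :=
        Finset.sum_comm
    _ = S f m := by
        refine Finset.sum_congr rfl fun i hi => ?_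
        rw [← Finset.card_filter, hcol i hi]

theorem IsPartition.transpose {N : ℕ} (hf : IsPartition f N) :
    IsPartition (transpose f) N := by
  obtain ⟨m, hm⟩ := hf.fin
  have hgc := fun {i j : ℕ} => le_apply_iff_le_transpose (i := i) (j := j) hf.mono hm
  refine ⟨fun j k hj hjk => ?_, ⟨f 1, fun j hj => ?_⟩, fun M hM => ?_⟩
  · rw [transpose_eq_card_filter hm hj, transpose_eq_card_filter hm (hj.trans hjk)]
    exact Finset.card_le_card (Finset.monotone_filter_right _ fun i _ (hki : k ≤ f i) => hjk.trans hki)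
  · by_contra! hpos
    have := (hgc le_rfl (by omega)).2 (Nat.one_le_iff_ne_zero.mpr hpos)
    omega
  · have hf1 : f 1 ≤ M := by
      by_contra! hMf
      have := (hgc le_rfl (by omega)).1 le_rfl
      have := hM (f 1) hMf
      omega
    rw [S_transpose hf.mono hm hf1, hf.total m hm]

lemma specialPairs_iff_symp_transpose (hmono : ∀ ⦃j k : ℕ⦄, 1 ≤ j → j ≤ k → f k ≤ f j)
    (hm : ∀ j, m < j → f j = 0) : SpecialPairs f ↔ Symp (transpose f) := by
  have hodd : ∀ k, Even (mult (transpose f) (2 * k + 1)) ↔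
      f (2 * (k + 1) - 1) % 2 = f (2 * (k + 1)) % 2 := by
    intro k
    rw [mult_transpose hmono hm (by omega), Nat.even_sub (hmono (by omega) (by omega)),
      Nat.even_iff, Nat.even_iff, show 2 * (k + 1) - 1 = 2 * k + 1 by omega,
      show 2 * (k + 1) = 2 * k + 1 + 1 by omega]
    omega
  constructor
  · rintro hsp i ⟨k, rfl⟩
    exact (hodd k).2 (hsp (k + 1) (by omega))
  · intro hsymp j hj
    obtain ⟨k, rfl⟩ : ∃ k, j = k + 1 := ⟨j - 1, by omega⟩
    exact (hodd k).1 (hsymp _ (odd_two_mul_add_one k))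

end Transpose

theorem stmt10_general (n : ℕ) (f : ℕ → ℕ) (hpart : IsPartition f (2*n)) :
    SpecialPairs f ↔ (IsPartition (transpose f) (2*n) ∧ Symp (transpose f)) := by
  obtain ⟨m, hm⟩ := hpart.fin
  rw [specialPairs_iff_symp_transpose hpart.mono hm]
  exact ⟨fun hsymp => ⟨hpart.transpose, hsymp⟩, And.right⟩

/-- An orthogonal partition of `2n` is special iff its transpose is symplectic. -/
theorem stmt10 (n : ℕ) (f : ℕ → ℕ) (hpart : IsPartition f (2*n)) (horth : Orth f) :
    SpecialPairs f ↔ (IsPartition (transpose f) (2*n) ∧ Symp (transpose f)) :=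
  stmt10_general n f hpart

end Wald
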